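/- arXiv:2404.18088 — 6 statements merged into one kernel-verified Lean document; each statement's English description precedes it below -/
import Mathlib

section
/- There is no self-dual linear code of length 6, dimension 3, and minimum Hamming weight 4 over the field F_4 with four elements. -/
section Aux

variable {F : Type*} [Field F] [Fintype F] [DecidableEq F]

private lemma char_two_aux (hF : Fintype.card F = 4) : ∀ a : F, a + a = 0 := by
  have h4 : (4 : F) = 0 := by
    have := FiniteField.cast_card_eq_zero (K := F)
    rwa [hF] at this
  have h2 : (2 : F) = 0 := by
    have h : (2 : F) * 2 = 4 := by norm_num
    exact mul_self_eq_zero.mp (h.trans h4)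
  intro a
  calc a + a = 2 * a := by ring
  _ = 0 := by rw [h2, zero_mul]

private lemma eq_of_add_eq_zero_char2 (h2 : ∀ a : F, a + a = 0) {a b : F}
    (h : a + b = 0) : a = b := by
  linear_combination h - h2 b

private lemma sq_inj (h2 : ∀ a : F, a + a = 0) {a b : F} (h : a * a = b * b) : a = b := by
  have hab : (a + b) * (a + b) = 0 := by
    linear_combination h + h2 (a * b) + h2 (b * b)
  exact eq_of_add_eq_zero_char2 h2 (mul_self_eq_zero.mp hab)

private lemma norm_le_three {c : Fin 6 → F} {i j k : Fin 6} (hij : i ≠ j) (hik : i ≠ k)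
    (hjk : j ≠ k) (hi : c i = 0) (hj : c j = 0) (hk : c k = 0) : hammingNorm c ≤ 3 := by
  have hsub : ({l | c l ≠ 0} : Finset (Fin 6)) ⊆ Finset.univ \ {i, j, k} := by
    intro l hl
    simp only [Finset.mem_filter, Finset.mem_univ, true_and] at hl
    simp only [Finset.mem_sdiff, Finset.mem_univ, true_and, Finset.mem_insert,
      Finset.mem_singleton]
    rintro (rfl | rfl | rfl)
    · exact hl hi
    · exact hl hj
    · exact hl hk
  have hcard : (Finset.univ \ ({i, j, k} : Finset (Fin 6))).card = 3 := by
    rw [Finset.card_sdiff_of_subset (Finset.subset_univ _)]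
    have : ({i, j, k} : Finset (Fin 6)).card = 3 := by
      rw [Finset.card_insert_of_notMem (by simp [hij, hik]),
        Finset.card_insert_of_notMem (by simp [hjk]), Finset.card_singleton]
    simp [this]
  exact le_trans (Finset.card_le_card hsub) (le_of_eq hcard)

/-- For any two distinct coordinates there is a codeword vanishing exactly at them. -/
private lemma exists_wt4 (C : Submodule F (Fin 6 → F)) (hdim : Module.finrank F C = 3)
    (hmin : ∀ c ∈ C, c ≠ 0 → 4 ≤ hammingNorm c) (i j : Fin 6) (hij : i ≠ j) :
    ∃ x, x ∈ C ∧ x i = 0 ∧ x j = 0 ∧ ∀ k, k ≠ i → k ≠ j → x k ≠ 0 := by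
  classical
  set φ : C →ₗ[F] F × F :=
    (((LinearMap.proj i).comp C.subtype).prod ((LinearMap.proj j).comp C.subtype)) with hφ
  have hni : ¬ Function.Injective φ := by
    intro h
    have hle := LinearMap.finrank_le_finrank_of_injective h
    rw [hdim, Module.finrank_prod, Module.finrank_self] at hle
    omega
  obtain ⟨a, b, hab, hne⟩ := Function.not_injective_iff.mp hni
  have hmemc : (↑a - ↑b : Fin 6 → F) ∈ C := C.sub_mem a.2 b.2
  have hci : (↑a - ↑b : Fin 6 → F) i = 0 := by
    have := congrArg Prod.fst hab
    simp only [hφ, LinearMap.prod_apply, LinearMap.comp_apply, LinearMap.proj_apply,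
      Pi.prod] at this
    exact sub_eq_zero_of_eq this
  have hcj : (↑a - ↑b : Fin 6 → F) j = 0 := by
    have := congrArg Prod.snd hab
    simp only [hφ, LinearMap.prod_apply, LinearMap.comp_apply, LinearMap.proj_apply,
      Pi.prod] at this
    exact sub_eq_zero_of_eq this
  have hcne : (↑a - ↑b : Fin 6 → F) ≠ 0 := by
    intro h
    exact hne (Subtype.coe_injective (by rwa [sub_eq_zero] at h))
  refine ⟨_, hmemc, hci, hcj, ?_⟩
  intro k hki hkj hk
  have h4 := hmin _ hmemc hcne
  have h3 := norm_le_three hki hkj hij hk hci hcj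
  omega

/-- No codeword has exactly one zero coordinate, given a word vanishing exactly at that
coordinate and one other. -/
private lemma no_single_zero (hF : Fintype.card F = 4) (h2 : ∀ a : F, a + a = 0)
    (C : Submodule F (Fin 6 → F)) (hmin : ∀ c ∈ C, c ≠ 0 → 4 ≤ hammingNorm c)
    {t w : Fin 6 → F} (ht : t ∈ C) (hw : w ∈ C) {i j : Fin 6} (hij : i ≠ j)
    (hti : t i = 0) (htk : ∀ k, k ≠ i → t k ≠ 0)
    (hwi : w i = 0) (hwj : w j = 0) (hwk : ∀ k, k ≠ i → k ≠ j → w k ≠ 0) : False := by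
  classical
  set S : Finset (Fin 6) := (Finset.univ.erase i).erase j with hS
  have hScard : S.card = 4 := by
    rw [hS, Finset.card_erase_of_mem (Finset.mem_erase.mpr ⟨hij.symm, Finset.mem_univ j⟩),
      Finset.card_erase_of_mem (Finset.mem_univ i)]
    simp
  set T : Finset F := Finset.univ.erase 0 with hT
  have hTcard : T.card = 3 := by
    rw [hT, Finset.card_erase_of_mem (Finset.mem_univ 0), Finset.card_univ, hF]
  have hmaps : ∀ k ∈ S, t k * (w k)⁻¹ ∈ T := by
    intro k hk
    rw [hS, Finset.mem_erase, Finset.mem_erase] at hk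
    obtain ⟨hkj, hki, -⟩ := hk
    rw [hT, Finset.mem_erase]
    exact ⟨mul_ne_zero (htk k hki) (inv_ne_zero (hwk k hki hkj)), Finset.mem_univ _⟩
  obtain ⟨k, hk, l, hl, hkl, heq⟩ :=
    Finset.exists_ne_map_eq_of_card_lt_of_maps_to (by omega) hmaps
  rw [hS, Finset.mem_erase, Finset.mem_erase] at hk hl
  obtain ⟨hkj, hki, -⟩ := hk
  obtain ⟨hlj, hli, -⟩ := hl
  set s : Fin 6 → F := t + (t k * (w k)⁻¹) • w with hs
  have hsmem : s ∈ C := C.add_mem ht (C.smul_mem _ hw)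
  have hsk : s k = 0 := by
    have hwk' := hwk k hki hkj
    have heq2 : t k * (w k)⁻¹ * w k = t k := by
      rw [mul_assoc, inv_mul_cancel₀ hwk', mul_one]
    simp only [hs, Pi.add_apply, Pi.smul_apply, smul_eq_mul, heq2]
    exact h2 _
  have hsl : s l = 0 := by
    have hwl' := hwk l hli hlj
    have heq2 : t k * (w k)⁻¹ * w l = t l := by
      rw [heq, mul_assoc, inv_mul_cancel₀ hwl', mul_one]
    simp only [hs, Pi.add_apply, Pi.smul_apply, smul_eq_mul, heq2]
    exact h2 _
  have hsi : s i = 0 := by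
    simp [hs, hti, hwi]
  have hsj : s j ≠ 0 := by
    simp [hs, hwj, htk j hij.symm]
  have hsne : s ≠ 0 := fun h => hsj (by rw [h]; rfl)
  have h4 := hmin s hsmem hsne
  have h3 := norm_le_three hki.symm hli.symm hkl hsi hsk hsl
  omega

/-- Partition lemma: if {p1,p2},{q1,q2},{r1,r2} partition the coordinates, x vanishes
exactly on the p's and y exactly on the q's, then x r1 = x r2. -/
private lemma partition_eq (hF : Fintype.card F = 4) (h2 : ∀ a : F, a + a = 0)
    (C : Submodule F (Fin 6 → F)) (hdim : Module.finrank F C = 3)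
    (horth : ∀ x ∈ C, ∀ v ∈ C, ∑ k, x k * v k = 0)
    (hmin : ∀ c ∈ C, c ≠ 0 → 4 ≤ hammingNorm c)
    (p1 p2 q1 q2 r1 r2 : Fin 6)
    (hmem : ∀ k : Fin 6, k = p1 ∨ k = p2 ∨ k = q1 ∨ k = q2 ∨ k = r1 ∨ k = r2)
    (hp1q1 : p1 ≠ q1) (hp1q2 : p1 ≠ q2) (hp2q1 : p2 ≠ q1) (hp2q2 : p2 ≠ q2)
    (hr1p1 : r1 ≠ p1) (hr1p2 : r1 ≠ p2) (hr2p1 : r2 ≠ p1) (hr2p2 : r2 ≠ p2)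
    (hr1q1 : r1 ≠ q1) (hr1q2 : r1 ≠ q2) (hr2q1 : r2 ≠ q1) (hr2q2 : r2 ≠ q2)
    (hr12 : r1 ≠ r2)
    (hsum : ∀ f : Fin 6 → F, ∑ k, f k = f p1 + f p2 + f q1 + f q2 + f r1 + f r2)
    {x y : Fin 6 → F} (hx : x ∈ C) (hy : y ∈ C)
    (hxp1 : x p1 = 0) (hxp2 : x p2 = 0) (hxs : ∀ k, k ≠ p1 → k ≠ p2 → x k ≠ 0)
    (hyq1 : y q1 = 0) (hyq2 : y q2 = 0) (hys : ∀ k, k ≠ q1 → k ≠ q2 → y k ≠ 0) :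
    x r1 = x r2 := by
  classical
  have hxr1 : x r1 ≠ 0 := hxs r1 hr1p1 hr1p2
  have hxr2 : x r2 ≠ 0 := hxs r2 hr2p1 hr2p2
  have hyr1 : y r1 ≠ 0 := hys r1 hr1q1 hr1q2
  have hyr2 : y r2 ≠ 0 := hys r2 hr2q1 hr2q2
  set s : Fin 6 → F := y r1 • x + x r1 • y with hs
  have hsmem : s ∈ C := C.add_mem (C.smul_mem _ hx) (C.smul_mem _ hy)
  have hsr1 : s r1 = 0 := by
    simp only [hs, Pi.add_apply, Pi.smul_apply, smul_eq_mul]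
    linear_combination h2 (x r1 * y r1)
  -- orthogonality relation
  have horth' : x r1 * y r1 + x r2 * y r2 = 0 := by
    have h := horth x hx y hy
    rw [hsum (fun k => x k * y k)] at h
    simpa [hxp1, hxp2, hyq1, hyq2] using h
  have hA : x r1 * y r1 = x r2 * y r2 := eq_of_add_eq_zero_char2 h2 horth'
  -- case on s r2
  by_cases hsr2 : s r2 = 0
  · have hB : y r1 * x r2 = x r1 * y r2 := by
      have : y r1 * x r2 + x r1 * y r2 = 0 := by
        simpa [hs, Pi.add_apply, Pi.smul_apply, smul_eq_mul] using hsr2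
      exact eq_of_add_eq_zero_char2 h2 this
    have hyy : y r1 = y r2 := by
      apply sq_inj h2
      have hcancel : y r1 * y r1 * (x r1 * x r2) = y r2 * y r2 * (x r1 * x r2) := by
        linear_combination (y r1 * x r2) * hA + (x r2 * y r2) * hB
      exact mul_right_cancel₀ (mul_ne_zero hxr1 hxr2) hcancel
    have : x r1 * y r1 = x r2 * y r1 := by rw [hA, hyy]
    exact mul_right_cancel₀ hyr1 this
  · exfalso
    obtain ⟨w, hwC, hw1, hw2, hws⟩ := exists_wt4 C hdim hmin r1 r2 hr12
    refine no_single_zero hF h2 C hmin hsmem hwC hr12 hsr1 ?_ hw1 hw2 hws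
    intro k hk
    rcases hmem k with rfl | rfl | rfl | rfl | rfl | rfl
    · simp only [hs, Pi.add_apply, Pi.smul_apply, smul_eq_mul, hxp1, mul_zero, zero_add]
      exact mul_ne_zero hxr1 (hys _ hp1q1 hp1q2)
    · simp only [hs, Pi.add_apply, Pi.smul_apply, smul_eq_mul, hxp2, mul_zero, zero_add]
      exact mul_ne_zero hxr1 (hys _ hp2q1 hp2q2)
    · simp only [hs, Pi.add_apply, Pi.smul_apply, smul_eq_mul, hyq1, mul_zero, add_zero]
      exact mul_ne_zero hyr1 (hxs _ hp1q1.symm hp2q1.symm)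
    · simp only [hs, Pi.add_apply, Pi.smul_apply, smul_eq_mul, hyq2, mul_zero, add_zero]
      exact mul_ne_zero hyr1 (hxs _ hp1q2.symm hp2q2.symm)
    · exact absurd rfl hk
    · exact hsr2

end Aux

/-- There is no self-dual `[6,3,4]` linear code over the field with four elements. -/
theorem no_self_dual_634_code (F : Type*) [Field F] [Fintype F] [DecidableEq F]
    (hF : Fintype.card F = 4) :
    ¬ ∃ C : Submodule F (Fin 6 → F),
        Module.finrank F C = 3 ∧
        (∀ x : Fin 6 → F, x ∈ C ↔ ∀ v ∈ C, ∑ i, x i * v i = 0) ∧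
        (∀ c ∈ C, c ≠ 0 → 4 ≤ hammingNorm c) := by
  rintro ⟨C, hdim, hdual, hmin⟩
  have h2 : ∀ a : F, a + a = 0 := char_two_aux hF
  have horth : ∀ x ∈ C, ∀ v ∈ C, ∑ k, x k * v k = 0 := fun x hx => (hdual x).mp hx
  obtain ⟨x, hx, hx0, hx1, hxs⟩ := exists_wt4 C hdim hmin 0 1 (by decide)
  obtain ⟨x', hx', hx'0, hx'2, hx's⟩ := exists_wt4 C hdim hmin 0 2 (by decide)
  obtain ⟨y23, hy23, hy23a, hy23b, hy23s⟩ := exists_wt4 C hdim hmin 2 3 (by decide)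
  obtain ⟨y24, hy24, hy24a, hy24b, hy24s⟩ := exists_wt4 C hdim hmin 2 4 (by decide)
  obtain ⟨y13, hy13, hy13a, hy13b, hy13s⟩ := exists_wt4 C hdim hmin 1 3 (by decide)
  obtain ⟨y14, hy14, hy14a, hy14b, hy14s⟩ := exists_wt4 C hdim hmin 1 4 (by decide)
  have h45 : x 4 = x 5 :=
    partition_eq hF h2 C hdim horth hmin 0 1 2 3 4 5 (by decide)
      (by decide) (by decide) (by decide) (by decide) (by decide) (by decide)
      (by decide) (by decide) (by decide) (by decide) (by decide) (by decide) (by decide)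
      (fun f => Fin.sum_univ_six f)
      hx hy23 hx0 hx1 hxs hy23a hy23b hy23s
  have h35 : x 3 = x 5 :=
    partition_eq hF h2 C hdim horth hmin 0 1 2 4 3 5 (by decide)
      (by decide) (by decide) (by decide) (by decide) (by decide) (by decide)
      (by decide) (by decide) (by decide) (by decide) (by decide) (by decide) (by decide)
      (fun f => by rw [Fin.sum_univ_six]; ring)
      hx hy24 hx0 hx1 hxs hy24a hy24b hy24s
  have h45' : x' 4 = x' 5 :=
    partition_eq hF h2 C hdim horth hmin 0 2 1 3 4 5 (by decide)
      (by decide) (by decide) (by decide) (by decide) (by decide) (by decide)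
      (by decide) (by decide) (by decide) (by decide) (by decide) (by decide) (by decide)
      (fun f => by rw [Fin.sum_univ_six]; ring)
      hx' hy13 hx'0 hx'2 hx's hy13a hy13b hy13s
  have h35' : x' 3 = x' 5 :=
    partition_eq hF h2 C hdim horth hmin 0 2 1 4 3 5 (by decide)
      (by decide) (by decide) (by decide) (by decide) (by decide) (by decide)
      (by decide) (by decide) (by decide) (by decide) (by decide) (by decide) (by decide)
      (fun f => by rw [Fin.sum_univ_six]; ring)
      hx' hy14 hx'0 hx'2 hx's hy14a hy14b hy14s
  have hfin := horth x hx x' hx'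
  rw [Fin.sum_univ_six] at hfin
  rw [hx0, hx1, hx'2, h45, h35, h45', h35'] at hfin
  have hzero : x 5 * x' 5 = 0 := by
    linear_combination hfin - h2 (x 5 * x' 5)
  exact mul_ne_zero (hxs 5 (by decide) (by decide)) (hx's 5 (by decide) (by decide)) hzero
end

section
/- Let C be a self-dual linear [2k,k]_q code with exactly three nonzero weights w_1 < w_2 < w_3, all at least 3 ≤ w_1. Then q(2k − w_3) < 2k. -/
/-- For a self-dual 3-weight `[2k,k]_q` code with nonzero weights
`3 ≤ w₁ < w₂ < w₃ ≤ 2k`, the first two Pless power moments force `q(2k − w₃) < 2k`. -/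
theorem three_weight_largest_weight_bound (q k w1 w2 w3 A1 A2 A3 : ℕ)
    (hq : 2 ≤ q) (hk : 1 ≤ k)
    (hw1 : 3 ≤ w1) (h12 : w1 < w2) (h23 : w2 < w3) (hw3 : w3 ≤ 2 * k)
    (hA3 : 0 < A3)
    (hm1 : A1 + A2 + A3 = q ^ k - 1)
    (hm2 : w1 * A1 + w2 * A2 + w3 * A3 = q ^ (k - 1) * (2 * k * (q - 1))) :
    q * (2 * k - w3) < 2 * k := by
  have hqpos : 0 < q := by omega
  have h1 : q ^ (k - 1) * (2 * k * (q - 1)) ≤ w3 * (q ^ k - 1) := by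
    rw [← hm2, ← hm1]
    calc w1 * A1 + w2 * A2 + w3 * A3
        ≤ w3 * A1 + w3 * A2 + w3 * A3 := by
          have h1 := Nat.mul_le_mul_right A1 (by omega : w1 ≤ w3)
          have h2 := Nat.mul_le_mul_right A2 (by omega : w2 ≤ w3)
          omega
      _ = w3 * (A1 + A2 + A3) := by ring
  have hpk : q ^ k = q * q ^ (k - 1) := by
    conv_lhs => rw [show k = 1 + (k - 1) by omega]
    rw [pow_add, pow_one]
  have h2 : q ^ k * (2 * k * (q - 1)) ≤ q * (w3 * (q ^ k - 1)) := by
    calc q ^ k * (2 * k * (q - 1)) = q * (q ^ (k - 1) * (2 * k * (q - 1))) := by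
          rw [hpk]; ring
      _ ≤ q * (w3 * (q ^ k - 1)) := Nat.mul_le_mul_left q h1
  have h3 : q * (w3 * (q ^ k - 1)) < q ^ k * (q * w3) := by
    have hqk : 1 ≤ q ^ k := Nat.one_le_pow _ _ hqpos
    have hlt : w3 * (q ^ k - 1) < w3 * q ^ k :=
      mul_lt_mul_of_pos_left (by omega) (by omega)
    calc q * (w3 * (q ^ k - 1)) < q * (w3 * q ^ k) :=
          mul_lt_mul_of_pos_left hlt hqpos
      _ = q ^ k * (q * w3) := by ring
  have h4 : 2 * k * (q - 1) < q * w3 := by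
    have h' : q ^ k * (2 * k * (q - 1)) < q ^ k * (q * w3) := lt_of_le_of_lt h2 h3
    exact Nat.lt_of_mul_lt_mul_left h'
  rcases le_or_gt (2 * k) w3 with h | h
  · rw [Nat.sub_eq_zero_of_le h, Nat.mul_zero]; omega
  · have e1 : q * (2 * k - w3) + q * w3 = q * (2 * k) := by
      rw [← Nat.mul_add]; congr 1; omega
    have hq1 : q - 1 + 1 = q := by omega
    have e2 : 2 * k * (q - 1) + 2 * k = q * (2 * k) := by
      calc 2 * k * (q - 1) + 2 * k = 2 * k * ((q - 1) + 1) := by ring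
        _ = q * (2 * k) := by rw [hq1]; ring
    linarith
end

section
/- There is no self-dual linear code of length 6 and dimension 3 over F_q (q a prime power, q ≥ 4) whose nonzero codewords have exactly the three weights 3, 4 and 5. -/
open Finset

section Aux
variable {F : Type*} [Field F] [Fintype F] [DecidableEq F]

theorem aux_ker_card {C : Submodule F (Fin 6 → F)} [Fintype C] {W : Type*} [AddCommGroup W]
    [Module F W] [FiniteDimensional F W]
    (hdim : Module.finrank F C = 3) (f : C →ₗ[F] W) (hf : Function.Surjective f)
    (p : C → Prop) [DecidablePred p] (hp : ∀ c, p c ↔ f c = 0) :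
    ({c | p c} : Finset C).card = Fintype.card F ^ (3 - Module.finrank F W) := by
  haveI : Fintype (LinearMap.ker f) := Fintype.ofFinite _
  have h1 : ({c | p c} : Finset C).card = Fintype.card (LinearMap.ker f) := by
    rw [← Fintype.card_subtype]
    exact Fintype.card_congr
      (Equiv.subtypeEquivRight (by intro c; rw [hp]; simp [LinearMap.mem_ker])).symm
  rw [h1, Module.card_eq_pow_finrank (K := F)]
  congr 1
  have h := LinearMap.finrank_range_add_finrank_ker f
  rw [LinearMap.range_eq_top.mpr hf, finrank_top, hdim] at h
  omega

theorem aux_sum_ite_const {α : Type*} [Fintype α] (p : α → Prop) [DecidablePred p] (k : ℕ) :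
    ∑ a : α, (if p a then k else 0) = ({a | p a} : Finset α).card * k := by
  rw [← Finset.sum_filter, Finset.sum_const, smul_eq_mul]

theorem aux_ite_mul_ite (p q : Prop) [Decidable p] [Decidable q] :
    (if p then (1:ℕ) else 0) * (if q then 1 else 0) = if p ∧ q then 1 else 0 := by
  by_cases hp : p <;> by_cases hq : q <;> simp [hp, hq]

end Aux

set_option maxHeartbeats 2000000 in
/-- There is no self-dual `[6,3]_q` code (`q ≥ 4`) whose nonzero codewords have
exactly the three weights `3`, `4` and `5`. -/
theorem no_self_dual_63_code_weights_345 (F : Type*) [Field F] [Fintype F] [DecidableEq F]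
    (hF : 4 ≤ Fintype.card F) :
    ¬ ∃ C : Submodule F (Fin 6 → F),
        Module.finrank F C = 3 ∧
        (∀ x : Fin 6 → F, x ∈ C ↔ ∀ v ∈ C, ∑ i, x i * v i = 0) ∧
        (∀ c ∈ C, c ≠ 0 → hammingNorm c = 3 ∨ hammingNorm c = 4 ∨ hammingNorm c = 5) ∧
        (∃ c ∈ C, hammingNorm c = 3) ∧
        (∃ c ∈ C, hammingNorm c = 4) ∧
        (∃ c ∈ C, hammingNorm c = 5) := by
  classical
  rintro ⟨C, hdim, hdual, hwts, -, -, -⟩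
  haveI : Fintype C := Fintype.ofFinite C
  set q := Fintype.card F with hq
  -- minimum distance ≥ 3
  have hmin : ∀ x ∈ C, x ≠ 0 → 3 ≤ hammingNorm x := by
    intro x hx hx0
    rcases hwts x hx hx0 with h|h|h <;> omega
  -- no nonzero codeword supported on two coordinates
  have hsupp : ∀ (x : Fin 6 → F) (i j : Fin 6), x ∈ C →
      (∀ k, k ≠ i → k ≠ j → x k = 0) → x = 0 := by
    intro x i j hx hk
    by_contra h0
    have h2 : hammingNorm x ≤ 2 := by
      calc hammingNorm x ≤ ({i, j} : Finset (Fin 6)).card := by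
            refine Finset.card_le_card ?_
            intro k hkk
            simp only [mem_filter, mem_univ, true_and] at hkk
            simp only [mem_insert, mem_singleton]
            by_contra hc
            push_neg at hc
            exact hkk (hk k hc.1 hc.2)
        _ ≤ 2 := (Finset.card_insert_le _ _).trans (by simp)
    have := hmin x hx h0; omega
  -- each coordinate is somewhere nonzero
  have hs1 : ∀ i : Fin 6, ∃ c ∈ C, c i ≠ 0 := by
    intro i
    by_contra hcon; push_neg at hcon
    have hmem : (Pi.single i (1:F) : Fin 6 → F) ∈ C := by
      rw [hdual]
      intro v hv
      have h1 : ∑ k, (Pi.single i (1:F) : Fin 6 → F) k * v k = v i := by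
        simp [Pi.single_apply, Finset.sum_ite_eq]
      rw [h1, hcon v hv]
    have h0 := hsupp _ i i hmem (fun k h1 _ => by simp [Pi.single_apply, h1])
    have h1 := congrFun h0 i
    simp at h1
  -- pairs of coordinates are independent
  have hs2 : ∀ i j : Fin 6, i ≠ j → ∃ c ∈ C, c i = 0 ∧ c j ≠ 0 := by
    intro i j hij
    obtain ⟨c0, hc0C, hc0⟩ := hs1 i
    by_contra hcon; push_neg at hcon
    set l : F := c0 j / c0 i with hl
    have key : ∀ v ∈ C, v j = l * v i := by
      intro v hv
      have hw : (v - (v i / c0 i) • c0) ∈ C := C.sub_mem hv (C.smul_mem _ hc0C)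
      have hwi : (v - (v i / c0 i) • c0) i = 0 := by
        simp [div_mul_cancel₀, hc0]
      have hwj := hcon _ hw hwi
      simp only [Pi.sub_apply, Pi.smul_apply, smul_eq_mul] at hwj
      rw [sub_eq_zero] at hwj
      rw [hwj, hl]; ring
    set x : Fin 6 → F := (Pi.single j (1:F) : Fin 6 → F) - l • (Pi.single i (1:F) : Fin 6 → F)
      with hx
    have hmem : x ∈ C := by
      rw [hdual]
      intro v hv
      have h1 : ∑ k, x k * v k = v j - l * v i := by
        simp [hx, Pi.single_apply, Finset.sum_ite_eq, sub_mul, Finset.sum_sub_distrib, mul_assoc]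
      rw [h1, key v hv, sub_self]
    have h0 := hsupp x i j hmem (fun k h1 h2 => by
      simp [hx, Pi.single_apply, h1, h2])
    have h1 := congrFun h0 j
    simp [hx, Pi.single_apply, hij.symm] at h1
  -- coordinate evaluation maps
  let φ : Fin 6 → (C →ₗ[F] F) := fun i => (LinearMap.proj i).comp C.subtype
  have hφ : ∀ i (c : C), φ i c = (c : Fin 6 → F) i := fun i c => rfl
  have hφs : ∀ i, Function.Surjective (φ i) := by
    intro i y
    obtain ⟨c0, hc0C, hc0⟩ := hs1 i
    refine ⟨⟨(y / c0 i) • c0, C.smul_mem _ hc0C⟩, ?_⟩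
    show (y / c0 i) * c0 i = y
    field_simp
  have hψs : ∀ i j, i ≠ j → Function.Surjective ((φ i).prod (φ j)) := by
    intro i j hij ⟨a, b⟩
    obtain ⟨c0, hc0C, hc0⟩ := hs1 i
    obtain ⟨c1, hc1C, hc1i, hc1j⟩ := hs2 i j hij
    refine ⟨⟨(a / c0 i) • c0 + ((b - (a / c0 i) * c0 j) / c1 j) • c1,
      C.add_mem (C.smul_mem _ hc0C) (C.smul_mem _ hc1C)⟩, ?_⟩
    have h1 : (a / c0 i) * c0 i + ((b - (a / c0 i) * c0 j) / c1 j) * c1 i = a := by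
      rw [hc1i]; field_simp; ring
    have h2 : (a / c0 i) * c0 j + ((b - (a / c0 i) * c0 j) / c1 j) * c1 j = b := by
      field_simp; ring
    exact Prod.ext h1 h2
  -- cardinalities
  have hcard : (Finset.univ : Finset C).card = q ^ 3 := by
    rw [Finset.card_univ, Module.card_eq_pow_finrank (K := F), hdim]
  have hNi : ∀ i : Fin 6, ({c : C | (c : Fin 6 → F) i = 0} : Finset C).card = q ^ 2 := by
    intro i
    have := aux_ker_card hdim (φ i) (hφs i)
      (fun c : C => (c : Fin 6 → F) i = 0) (fun c => by rw [hφ])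
    rwa [Module.finrank_self] at this
  have hNij : ∀ i j : Fin 6, i ≠ j →
      ({c : C | (c : Fin 6 → F) i = 0 ∧ (c : Fin 6 → F) j = 0} : Finset C).card = q := by
    intro i j hij
    have := aux_ker_card hdim ((φ i).prod (φ j)) (hψs i j hij)
      (fun c : C => (c : Fin 6 → F) i = 0 ∧ (c : Fin 6 → F) j = 0)
      (fun c => by rw [LinearMap.prod_apply]; simp [hφ, Prod.ext_iff])
    rwa [Module.finrank_prod, Module.finrank_self, show 3 - (1 + 1) = 1 from rfl, pow_one] at this
  -- weight class counts
  set N3 := (Finset.univ.filter fun c : C => hammingNorm (c : Fin 6 → F) = 3).card with hN3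
  set N4 := (Finset.univ.filter fun c : C => hammingNorm (c : Fin 6 → F) = 4).card with hN4
  set N5 := (Finset.univ.filter fun c : C => hammingNorm (c : Fin 6 → F) = 5).card with hN5
  -- pointwise decompositions
  have hcz : ∀ c : C, c ≠ 0 → ((c : Fin 6 → F) ≠ 0) := by
    intro c h hc
    exact h (by exact_mod_cast Subtype.ext hc)
  have hpt1 : ∀ c : C, (1:ℕ) = (if c = 0 then 1 else 0) +
      ((if hammingNorm (c : Fin 6 → F) = 3 then 1 else 0) +
      ((if hammingNorm (c : Fin 6 → F) = 4 then 1 else 0) +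
      (if hammingNorm (c : Fin 6 → F) = 5 then 1 else 0))) := by
    intro c
    rcases eq_or_ne c 0 with rfl | h
    · simp
    · rcases hwts _ c.2 (hcz c h) with hh | hh | hh <;> rw [hh] <;> simp [h]
  have hpt2 : ∀ c : C, hammingNorm (c : Fin 6 → F) =
      (if hammingNorm (c : Fin 6 → F) = 3 then 3 else 0) +
      ((if hammingNorm (c : Fin 6 → F) = 4 then 4 else 0) +
      (if hammingNorm (c : Fin 6 → F) = 5 then 5 else 0)) := by
    intro c
    rcases eq_or_ne c 0 with rfl | h
    · simp
    · rcases hwts _ c.2 (hcz c h) with hh | hh | hh <;> rw [hh] <;> simp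
  have hpt3 : ∀ c : C, hammingNorm (c : Fin 6 → F) * hammingNorm (c : Fin 6 → F) =
      (if hammingNorm (c : Fin 6 → F) = 3 then 9 else 0) +
      ((if hammingNorm (c : Fin 6 → F) = 4 then 16 else 0) +
      (if hammingNorm (c : Fin 6 → F) = 5 then 25 else 0)) := by
    intro c
    rcases eq_or_ne c 0 with rfl | h
    · simp
    · rcases hwts _ c.2 (hcz c h) with hh | hh | hh <;> rw [hh] <;> simp
  -- equation A
  have h0card : (Finset.univ.filter fun c : C => c = 0).card = 1 := by
    rw [show (Finset.univ.filter fun c : C => c = 0) = {0} from by ext c; simp]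
    simp
  have eqA : q ^ 3 = 1 + (N3 + (N4 + N5)) := by
    calc q ^ 3 = ∑ _c : C, (1:ℕ) := by
          rw [Finset.sum_const, smul_eq_mul, mul_one, hcard]
      _ = ∑ c : C, ((if c = 0 then 1 else 0) +
          ((if hammingNorm (c : Fin 6 → F) = 3 then 1 else 0) +
          ((if hammingNorm (c : Fin 6 → F) = 4 then 1 else 0) +
          (if hammingNorm (c : Fin 6 → F) = 5 then 1 else 0)))) :=
          Finset.sum_congr rfl fun c _ => hpt1 c
      _ = 1 + (N3 + (N4 + N5)) := by
          rw [Finset.sum_add_distrib, Finset.sum_add_distrib, Finset.sum_add_distrib,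
            ← Finset.card_filter, ← Finset.card_filter, ← Finset.card_filter,
            ← Finset.card_filter, h0card, hN3, hN4, hN5]
  -- first moment
  set S1 := ∑ c : C, hammingNorm (c : Fin 6 → F) with hS1def
  have eqB1 : S1 = N3 * 3 + (N4 * 4 + N5 * 5) := by
    calc S1 = ∑ c : C, ((if hammingNorm (c : Fin 6 → F) = 3 then 3 else 0) +
        ((if hammingNorm (c : Fin 6 → F) = 4 then 4 else 0) +
        (if hammingNorm (c : Fin 6 → F) = 5 then 5 else 0))) :=
          Finset.sum_congr rfl fun c _ => hpt2 c
      _ = N3 * 3 + (N4 * 4 + N5 * 5) := by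
          rw [Finset.sum_add_distrib, Finset.sum_add_distrib,
            aux_sum_ite_const, aux_sum_ite_const, aux_sum_ite_const, hN3, hN4, hN5]
  have hwtsum : ∀ c : C, hammingNorm (c : Fin 6 → F) =
      ∑ i : Fin 6, if (c : Fin 6 → F) i ≠ 0 then 1 else 0 := by
    intro c
    unfold hammingNorm
    rw [Finset.card_filter]
  have hNi' : ∀ i : Fin 6,
      (Finset.univ.filter fun c : C => (c : Fin 6 → F) i ≠ 0).card + q ^ 2 = q ^ 3 := by
    intro i
    have h := Finset.card_filter_add_card_filter_not
      (s := (Finset.univ : Finset C)) (p := fun c : C => (c : Fin 6 → F) i = 0)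
    rw [hcard, hNi i] at h
    have h2 : (Finset.univ.filter fun c : C => ¬ (c : Fin 6 → F) i = 0)
        = (Finset.univ.filter fun c : C => (c : Fin 6 → F) i ≠ 0) :=
      Finset.filter_congr fun c _ => Iff.rfl
    rw [h2] at h
    omega
  have hS1' : S1 = ∑ i : Fin 6, (Finset.univ.filter fun c : C => (c : Fin 6 → F) i ≠ 0).card := by
    calc S1 = ∑ c : C, ∑ i : Fin 6, (if (c : Fin 6 → F) i ≠ 0 then 1 else 0) :=
          Finset.sum_congr rfl fun c _ => hwtsum c
      _ = ∑ i : Fin 6, ∑ c : C, (if (c : Fin 6 → F) i ≠ 0 then 1 else 0) := Finset.sum_comm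
      _ = _ := Finset.sum_congr rfl fun i _ => (Finset.card_filter _ _).symm
  have eqB2 : S1 + 6 * q ^ 2 = 6 * q ^ 3 := by
    have h := Finset.sum_congr rfl fun (i : Fin 6) (_ : i ∈ Finset.univ) => hNi' i
    rw [Finset.sum_add_distrib, Finset.sum_const, Finset.sum_const] at h
    simp only [Finset.card_univ, Fintype.card_fin, smul_eq_mul] at h
    rw [hS1']
    omega
  -- second moment
  set S2 := ∑ c : C, hammingNorm (c : Fin 6 → F) * hammingNorm (c : Fin 6 → F) with hS2def
  have eqC1 : S2 = N3 * 9 + (N4 * 16 + N5 * 25) := by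
    calc S2 = ∑ c : C, ((if hammingNorm (c : Fin 6 → F) = 3 then 9 else 0) +
        ((if hammingNorm (c : Fin 6 → F) = 4 then 16 else 0) +
        (if hammingNorm (c : Fin 6 → F) = 5 then 25 else 0))) :=
          Finset.sum_congr rfl fun c _ => hpt3 c
      _ = N3 * 9 + (N4 * 16 + N5 * 25) := by
          rw [Finset.sum_add_distrib, Finset.sum_add_distrib,
            aux_sum_ite_const, aux_sum_ite_const, aux_sum_ite_const, hN3, hN4, hN5]
  set n : Fin 6 → Fin 6 → ℕ := fun i j =>
    (Finset.univ.filter fun c : C => (c : Fin 6 → F) i ≠ 0 ∧ (c : Fin 6 → F) j ≠ 0).card with hn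
  set m : Fin 6 → Fin 6 → ℕ := fun i j =>
    (Finset.univ.filter fun c : C => (c : Fin 6 → F) i = 0 ∧ (c : Fin 6 → F) j = 0).card with hm
  have hS2' : S2 = ∑ i : Fin 6, ∑ j : Fin 6, n i j := by
    calc S2 = ∑ c : C, ((∑ i : Fin 6, if (c : Fin 6 → F) i ≠ 0 then 1 else 0) *
          (∑ j : Fin 6, if (c : Fin 6 → F) j ≠ 0 then 1 else 0)) :=
          Finset.sum_congr rfl fun c _ => by rw [← hwtsum c]
      _ = ∑ c : C, ∑ i : Fin 6, ∑ j : Fin 6,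
            ((if (c : Fin 6 → F) i ≠ 0 then 1 else 0) *
             (if (c : Fin 6 → F) j ≠ 0 then 1 else 0)) :=
          Finset.sum_congr rfl fun c _ => Finset.sum_mul_sum _ _ _ _
      _ = ∑ c : C, ∑ i : Fin 6, ∑ j : Fin 6,
            (if (c : Fin 6 → F) i ≠ 0 ∧ (c : Fin 6 → F) j ≠ 0 then 1 else 0) :=
          Finset.sum_congr rfl fun c _ => Finset.sum_congr rfl fun i _ =>
            Finset.sum_congr rfl fun j _ => aux_ite_mul_ite _ _
      _ = ∑ i : Fin 6, ∑ c : C, ∑ j : Fin 6,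
            (if (c : Fin 6 → F) i ≠ 0 ∧ (c : Fin 6 → F) j ≠ 0 then 1 else 0) := Finset.sum_comm
      _ = ∑ i : Fin 6, ∑ j : Fin 6, ∑ c : C,
            (if (c : Fin 6 → F) i ≠ 0 ∧ (c : Fin 6 → F) j ≠ 0 then 1 else 0) :=
          Finset.sum_congr rfl fun i _ => Finset.sum_comm
      _ = ∑ i : Fin 6, ∑ j : Fin 6, n i j :=
          Finset.sum_congr rfl fun i _ => Finset.sum_congr rfl fun j _ =>
            (Finset.card_filter _ _).symm
  have hIE : ∀ i j : Fin 6, n i j + 2 * q ^ 2 = q ^ 3 + m i j := by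
    intro i j
    have h1 := Finset.card_union_add_card_inter
      (Finset.univ.filter fun c : C => (c : Fin 6 → F) i = 0)
      (Finset.univ.filter fun c : C => (c : Fin 6 → F) j = 0)
    have h2 := Finset.card_filter_add_card_filter_not
      (s := (Finset.univ : Finset C))
      (p := fun c : C => (c : Fin 6 → F) i = 0 ∨ (c : Fin 6 → F) j = 0)
    rw [Finset.filter_or, hcard] at h2
    have h3 : (Finset.univ.filter fun c : C =>
        ¬ ((c : Fin 6 → F) i = 0 ∨ (c : Fin 6 → F) j = 0)) =
        (Finset.univ.filter fun c : C => (c : Fin 6 → F) i ≠ 0 ∧ (c : Fin 6 → F) j ≠ 0) :=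
      Finset.filter_congr fun c _ => by tauto
    rw [h3] at h2
    rw [← Finset.filter_and] at h1
    rw [hNi i, hNi j] at h1
    have hn' : n i j = (Finset.univ.filter fun c : C =>
        (c : Fin 6 → F) i ≠ 0 ∧ (c : Fin 6 → F) j ≠ 0).card := rfl
    have hm' : m i j = (Finset.univ.filter fun c : C =>
        (c : Fin 6 → F) i = 0 ∧ (c : Fin 6 → F) j = 0).card := rfl
    omega
  have hmii : ∀ i : Fin 6, m i i = q ^ 2 := by
    intro i
    have h1 : (Finset.univ.filter fun c : C =>
        (c : Fin 6 → F) i = 0 ∧ (c : Fin 6 → F) i = 0) =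
        (Finset.univ.filter fun c : C => (c : Fin 6 → F) i = 0) :=
      Finset.filter_congr fun c _ => by tauto
    show (Finset.univ.filter fun c : C =>
        (c : Fin 6 → F) i = 0 ∧ (c : Fin 6 → F) i = 0).card = q ^ 2
    rw [h1, hNi i]
  have hmij : ∀ i j : Fin 6, i ≠ j → m i j = q := fun i j hij => hNij i j hij
  have hmsum : ∀ i : Fin 6, ∑ j : Fin 6, m i j = q ^ 2 + 5 * q := by
    intro i
    rw [← Finset.add_sum_erase _ _ (Finset.mem_univ i), hmii i]
    congr 1
    have h1 : ∑ j ∈ Finset.univ.erase i, m i j = ∑ _j ∈ Finset.univ.erase i, q :=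
      Finset.sum_congr rfl fun j hj => hmij i j (Ne.symm (Finset.mem_erase.mp hj).1)
    rw [h1, Finset.sum_const, Finset.card_erase_of_mem (Finset.mem_univ i)]
    simp [mul_comm]
  have eqC2 : S2 + 72 * q ^ 2 = 36 * q ^ 3 + (6 * q ^ 2 + 30 * q) := by
    have h := Finset.sum_congr rfl fun (i : Fin 6) (_ : i ∈ Finset.univ) =>
      (Finset.sum_congr rfl fun (j : Fin 6) (_ : j ∈ Finset.univ) => hIE i j)
    simp only [Finset.sum_add_distrib, Finset.sum_const, Finset.card_univ, Fintype.card_fin,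
      smul_eq_mul] at h
    have h2 : ∑ i : Fin 6, ∑ j : Fin 6, m i j = ∑ _i : Fin 6, (q ^ 2 + 5 * q) :=
      Finset.sum_congr rfl fun i _ => hmsum i
    rw [Finset.sum_const] at h2
    simp only [Finset.card_univ, Fintype.card_fin, smul_eq_mul] at h2
    rw [hS2']
    omega
  -- final arithmetic contradiction
  have hA : ((q : ℤ)) ^ 3 = 1 + ((N3 : ℤ) + ((N4 : ℤ) + (N5 : ℤ))) := by exact_mod_cast eqA
  have hB : (N3 : ℤ) * 3 + ((N4 : ℤ) * 4 + (N5 : ℤ) * 5) + 6 * (q : ℤ) ^ 2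
      = 6 * (q : ℤ) ^ 3 := by
    rw [eqB1] at eqB2; exact_mod_cast eqB2
  have hC : (N3 : ℤ) * 9 + ((N4 : ℤ) * 16 + (N5 : ℤ) * 25) + 72 * (q : ℤ) ^ 2
      = 36 * (q : ℤ) ^ 3 + (6 * (q : ℤ) ^ 2 + 30 * (q : ℤ)) := by
    rw [eqC1] at eqC2; exact_mod_cast eqC2
  have hQ : (4 : ℤ) ≤ (q : ℤ) := by exact_mod_cast hF
  have hN4' : (N4 : ℤ) = -3 * (q : ℤ) ^ 3 + 18 * (q : ℤ) ^ 2 - 30 * (q : ℤ) + 15 := by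
    linarith
  have hpos : (0 : ℤ) ≤ ((q : ℤ) - 1) * (((q : ℤ) - 4) * ((q : ℤ) - 1)) :=
    mul_nonneg (by linarith) (mul_nonneg (by linarith) (by linarith))
  have hN4nn : (0 : ℤ) ≤ (N4 : ℤ) := Int.ofNat_nonneg N4
  nlinarith [hN4', hpos, hN4nn, hQ]
end

section
/- For all integers k ≥ 11 and q ≥ 2, the quantity (q−1)^3 · k(2k−1)(2k−2) is strictly less than 3·(q^k − 1 − 2k(q−1) − k(2k−1)(q−1)^2). -/
private lemma key_aux (q : ℤ) (hq : 2 ≤ q) :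
    ∀ k : ℕ, 11 ≤ k →
      3 + 6 * (k : ℤ) * (q - 1) + (k : ℤ) * (2 * k - 1) * 3 * (q - 1) ^ 2
        + (k : ℤ) * (2 * k - 1) * (2 * k - 2) * (q - 1) ^ 3 < 3 * q ^ k := by
  intro k hk
  induction k, hk using Nat.le_induction with
  | base =>
    push_cast
    rcases eq_or_lt_of_le hq with h | h
    · subst h; norm_num
    · have h3 : (3 : ℤ) ≤ q := h
      have hp1 : (1 : ℤ) ≤ q - 1 := by linarith
      have hp2 : (q - 1) ≤ (q - 1) ^ 2 := by nlinarith
      have hp3 : (q - 1) ^ 2 ≤ (q - 1) ^ 3 := by nlinarith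
      have hq3 : (q - 1) ^ 3 ≤ q ^ 3 := by nlinarith
      have h8 : (3 : ℤ) ^ 8 ≤ q ^ 8 := pow_le_pow_left₀ (by norm_num) h3 8
      have hq30 : (0 : ℤ) ≤ q ^ 3 := by positivity
      have : q ^ 11 = q ^ 8 * q ^ 3 := by ring
      nlinarith [mul_le_mul_of_nonneg_right h8 hq30]
  | succ k hk ih =>
    have hK : (11 : ℤ) ≤ (k : ℤ) := by exact_mod_cast hk
    have hp1 : (1 : ℤ) ≤ q - 1 := by linarith
    have hp2 : (q - 1) ≤ (q - 1) ^ 2 := by nlinarith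
    have hp3 : (q - 1) ^ 2 ≤ (q - 1) ^ 3 := by nlinarith
    have hp4 : (q - 1) ^ 3 ≤ (q - 1) ^ 4 := by nlinarith
    have hq0 : (0 : ℤ) < q := by linarith
    have step : 3 * q ^ (k + 1) = q * (3 * q ^ k) := by ring
    push_cast
    have hmul : q * (3 + 6 * (k : ℤ) * (q - 1) + (k : ℤ) * (2 * k - 1) * 3 * (q - 1) ^ 2
        + (k : ℤ) * (2 * k - 1) * (2 * k - 2) * (q - 1) ^ 3) < q * (3 * q ^ k) :=
      mul_lt_mul_of_pos_left ih hq0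
    have hpoly : 3 + 6 * ((k : ℤ) + 1) * (q - 1)
        + ((k : ℤ) + 1) * (2 * ((k : ℤ) + 1) - 1) * 3 * (q - 1) ^ 2
        + ((k : ℤ) + 1) * (2 * ((k : ℤ) + 1) - 1) * (2 * ((k : ℤ) + 1) - 2) * (q - 1) ^ 3
        ≤ q * (3 + 6 * (k : ℤ) * (q - 1) + (k : ℤ) * (2 * k - 1) * 3 * (q - 1) ^ 2
        + (k : ℤ) * (2 * k - 1) * (2 * k - 2) * (q - 1) ^ 3) := by
      have hp14 : (q - 1) ≤ (q - 1) ^ 4 := by nlinarith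
      have hp24 : (q - 1) ^ 2 ≤ (q - 1) ^ 4 := by nlinarith
      have hp34 : (q - 1) ^ 3 ≤ (q - 1) ^ 4 := hp4
      nlinarith [mul_le_mul_of_nonneg_left hp14 (by norm_num : (0:ℤ) ≤ 3),
        mul_le_mul_of_nonneg_left hp24 (by nlinarith : (0:ℤ) ≤ 6 * (k:ℤ) + 3),
        mul_le_mul_of_nonneg_left hp34 (by nlinarith : (0:ℤ) ≤ 6 * (k:ℤ)^2 + 3 * (k:ℤ)),
        mul_nonneg (by nlinarith : (0:ℤ) ≤ 4 * (k:ℤ)^3 - 12 * (k:ℤ)^2 - 7 * (k:ℤ) - 6) (by positivity : (0:ℤ) ≤ (q-1)^4)]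
    calc 3 + 6 * ((k : ℤ) + 1) * (q - 1)
        + ((k : ℤ) + 1) * (2 * ((k : ℤ) + 1) - 1) * 3 * (q - 1) ^ 2
        + ((k : ℤ) + 1) * (2 * ((k : ℤ) + 1) - 1) * (2 * ((k : ℤ) + 1) - 2) * (q - 1) ^ 3
        ≤ q * (3 + 6 * (k : ℤ) * (q - 1) + (k : ℤ) * (2 * k - 1) * 3 * (q - 1) ^ 2
          + (k : ℤ) * (2 * k - 1) * (2 * k - 2) * (q - 1) ^ 3) := hpoly
      _ < q * (3 * q ^ k) := hmul
      _ = 3 * q ^ (k + 1) := by ring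

/-- For `k ≥ 11` and `q ≥ 2`,
`(q−1)³ k(2k−1)(2k−2) < 3(q^k − 1 − 2k(q−1) − k(2k−1)(q−1)²)`. -/
theorem fBeta3_lt_one (q : ℤ) (k : ℕ) (hq : 2 ≤ q) (hk : 11 ≤ k) :
    (q - 1) ^ 3 * (k * (2 * k - 1) * (2 * k - 2)) <
      3 * (q ^ k - 1 - 2 * k * (q - 1) - k * (2 * k - 1) * (q - 1) ^ 2) := by
  have h := key_aux q hq k hk
  linarith [h]
end

section
/- The only pairs (q,k) with q a prime power, 2 ≤ q ≤ 53, 4 ≤ k ≤ 10, for which f(q,k) = (q−1)^3 k(2k−1)(2k−2) / (3[q^k − 1 − 2k(q−1) − k(2k−1)(q−1)^2]) is a positive integer are (7,4) with value 9 and (3,6) with value 4. -/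
/-- The reciprocal packing coefficient `β₃⁻¹` for a hypothetical self-dual completely
regular `[2k,k,6]_q` code with covering radius 3. -/
noncomputable def fBeta3 (q k : ℕ) : ℚ :=
  ((q : ℚ) - 1) ^ 3 * (k * (2 * k - 1) * (2 * k - 2)) /
    (3 * ((q : ℚ) ^ k - 1 - 2 * k * ((q : ℚ) - 1) - k * (2 * k - 1) * ((q : ℚ) - 1) ^ 2))

/-- Integer numerator of `fBeta3`. -/
def NfAux (q k : ℕ) : ℤ := ((q:ℤ) - 1)^3 * (k * (2*k-1) * (2*k-2))

/-- Integer denominator of `fBeta3`. -/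
def DfAux (q k : ℕ) : ℤ :=
  3 * ((q:ℤ)^k - 1 - 2*k*((q:ℤ)-1) - k*(2*k-1)*((q:ℤ)-1)^2)

lemma fBeta3_eq (q k : ℕ) : fBeta3 q k = (NfAux q k : ℚ) / (DfAux q k : ℚ) := by
  have h1 : ((NfAux q k : ℚ)) = ((q : ℚ) - 1) ^ 3 * (k * (2 * k - 1) * (2 * k - 2)) := by
    simp only [NfAux]; push_cast; ring
  have h2 : ((DfAux q k : ℚ)) =
      3 * ((q : ℚ) ^ k - 1 - 2 * k * ((q : ℚ) - 1) - k * (2 * k - 1) * ((q : ℚ) - 1) ^ 2) := by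
    simp only [DfAux]; push_cast; ring
  rw [fBeta3, ← h1, ← h2]

lemma key (N D : ℤ) (hD : D ≠ 0) :
    (∃ m : ℕ, 0 < m ∧ (N : ℚ) / (D : ℚ) = m) ↔ (D ∣ N ∧ 0 < N * D) := by
  have hDQ : (D : ℚ) ≠ 0 := Int.cast_ne_zero.mpr hD
  constructor
  · rintro ⟨m, hm, h⟩
    rw [div_eq_iff hDQ] at h
    have h' : N = (m : ℤ) * D := by exact_mod_cast h
    constructor
    · exact ⟨m, by linarith [h']⟩
    · rw [h']
      have : (0:ℤ) < (m:ℤ) := by exact_mod_cast hm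
      nlinarith [mul_self_pos.mpr hD]
  · rintro ⟨⟨c, rfl⟩, hpos⟩
    have hc : 0 < c := by nlinarith [mul_self_pos.mpr hD]
    refine ⟨c.toNat, by omega, ?_⟩
    push_cast [Int.toNat_of_nonneg hc.le]
    field_simp
    exact_mod_cast (Int.toNat_of_nonneg hc.le).symm

lemma main_iff (q k : ℕ) (hD : DfAux q k ≠ 0) :
    (∃ m : ℕ, 0 < m ∧ fBeta3 q k = m) ↔ (DfAux q k ∣ NfAux q k ∧ 0 < NfAux q k * DfAux q k) := by
  rw [fBeta3_eq]; exact key _ _ hD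

set_option maxRecDepth 40000 in
/-- Among prime powers `2 ≤ q ≤ 53` and `4 ≤ k ≤ 10`, the function `f(q,k)` is a
positive integer exactly for `(7,4)` (value `9`) and `(3,6)` (value `4`). -/
theorem fBeta3_integer_classification :
    (∀ q k : ℕ, IsPrimePow q → 2 ≤ q → q ≤ 53 → 4 ≤ k → k ≤ 10 →
      ((∃ m : ℕ, 0 < m ∧ fBeta3 q k = m) ↔ (q = 7 ∧ k = 4) ∨ (q = 3 ∧ k = 6))) ∧
    fBeta3 7 4 = 9 ∧ fBeta3 3 6 = 4 := by
  refine ⟨?_, by rw [fBeta3_eq]; norm_num [NfAux, DfAux],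
    by rw [fBeta3_eq]; norm_num [NfAux, DfAux]⟩
  intro q k hq h2 h53 h4 h10
  interval_cases q <;>
    first
      | exact absurd hq (by decide)
      | (interval_cases k <;> rw [main_iff _ _ (by decide)] <;> decide)
end

section
/- The only pair of integers (k,λ) with 3 ≤ k ≤ 10 and 0 ≤ λ ≤ k−1 for which ℓ(k,λ) = (2/3)·k(2k−1)(λ+1)(k−1−λ) / ((λ+1)(2^k−1) − k[2(λ+1)+(2k−1)]) is a positive integer is (k,λ) = (5,2), with value 10. -/
/-- A rational is a positive natural number iff it is positive and has denominator 1. -/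
lemma ellBeta3_key (q : ℚ) : (∃ m : ℕ, 0 < m ∧ q = m) ↔ 0 < q ∧ q.den = 1 := by
  constructor
  · rintro ⟨m, hm, rfl⟩
    exact ⟨by exact_mod_cast hm, Rat.den_natCast m⟩
  · rintro ⟨hq, hd⟩
    have hn := Rat.num_pos.mpr hq
    refine ⟨q.num.toNat, by omega, ?_⟩
    have h1 : (q.num : ℚ) = q := by rw [← Rat.num_div_den q, hd]; simp
    have h2 : ((q.num.toNat : ℕ) : ℚ) = (q.num : ℚ) := by
      exact_mod_cast congrArg (Int.cast : ℤ → ℚ) (Int.toNat_of_nonneg hn.le)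
    rw [h2]; exact h1.symm

/-- The reciprocal packing coefficient `β₃⁻¹` for a hypothetical binary self-dual
completely regular `[2k,k,4]₂` code with covering radius 3, whose weight-4 codewords
form a `2-(2k,4,λ)` design. -/
noncomputable def ellBeta3 (k lam : ℕ) : ℚ :=
  (2 / 3) * ((k : ℚ) * (2 * k - 1) * (lam + 1) * ((k : ℚ) - 1 - lam)) /
    (((lam : ℚ) + 1) * (2 ^ k - 1) - (k : ℚ) * (2 * ((lam : ℚ) + 1) + (2 * k - 1)))

/-- For `3 ≤ k ≤ 10` and `0 ≤ λ ≤ k − 1`, `ℓ(k,λ)` is a positive integer only for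
`(k,λ) = (5,2)`, where its value is `10`. -/
theorem ellBeta3_integer_classification :
    (∀ k lam : ℕ, 3 ≤ k → k ≤ 10 → lam ≤ k - 1 →
      ((∃ m : ℕ, 0 < m ∧ ellBeta3 k lam = m) ↔ (k = 5 ∧ lam = 2))) ∧
    ellBeta3 5 2 = 10 := by
  constructor
  · intro k lam hk3 hk10 hlam
    interval_cases k <;> interval_cases lam <;>
      (rw [ellBeta3_key]; norm_num [ellBeta3])
  · norm_num [ellBeta3]
end
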